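/- arXiv:2504.05440 — 3 statements merged into one kernel-verified Lean document; each statement's English description precedes it below -/
import Mathlib

section
/- With the notation of the combinatorial function δ attached to a tuple (k_1,…,k_e) of nonnegative integers summing to r (with f nonzero entries): r − e·δ(r) = 0 if and only if f = e and all nonzero k_i are equal to r/e (i.e., the Young diagram is a rectangle with e rows). -/
/-- `mu e k j` = number of parts `k_i`, `1 ≤ i ≤ e`, of size at least `j`
(column lengths of the Young diagram). -/
def mu (e : ℕ) (k : ℕ → ℕ) (j : ℕ) : ℕ :=
  ((Finset.Icc 1 e).filter (fun i => j ≤ k i)).card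

/-- `delta e k i = j` iff `∑_{m<j} μ(m) < i ≤ ∑_{m≤j} μ(m)`. -/
noncomputable def delta (e : ℕ) (k : ℕ → ℕ) (i : ℕ) : ℕ :=
  sInf {j : ℕ | i ≤ ∑ m ∈ Finset.Icc 1 j, mu e k m}

/-- `f` = number of nonzero parts. -/
def nzCount (e : ℕ) (k : ℕ → ℕ) : ℕ :=
  ((Finset.Icc 1 e).filter (fun i => k i ≠ 0)).card

/-!
The first `j` columns of the Young diagram of `k` contain `∑ᵢ min (kᵢ, j)` boxes, which
equals `r = ∑ᵢ kᵢ` exactly when `j` is at least the largest part. Hence `δ(r) = max kᵢ`, and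
`r = e · max kᵢ` says that the `e` parts all attain their maximum.
-/

lemma sum_mu_eq_sum_min (e j : ℕ) (k : ℕ → ℕ) :
    ∑ m ∈ Finset.Icc 1 j, mu e k m = ∑ i ∈ Finset.Icc 1 e, min (k i) j := by
  simp_rw [mu, Finset.card_filter]
  rw [Finset.sum_comm]
  refine Finset.sum_congr rfl fun i _ => ?_
  rw [← Finset.card_filter]
  have h : (Finset.Icc 1 j).filter (fun m => m ≤ k i) = Finset.Icc 1 (min (k i) j) := by
    ext m; simp only [Finset.mem_filter, Finset.mem_Icc]; omega
  simp [h]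

lemma sum_le_sum_mu_iff (e j : ℕ) (k : ℕ → ℕ) :
    ∑ i ∈ Finset.Icc 1 e, k i ≤ ∑ m ∈ Finset.Icc 1 j, mu e k m ↔
      (Finset.Icc 1 e).sup k ≤ j := by
  have hmin : ∀ i ∈ Finset.Icc 1 e, min (k i) j ≤ k i := fun _ _ => min_le_left _ _
  rw [sum_mu_eq_sum_min, Finset.sup_le_iff, (Finset.sum_le_sum hmin).ge_iff_eq,
    Finset.sum_eq_sum_iff_of_le hmin]
  exact forall₂_congr fun _ _ => min_eq_left_iff

lemma delta_sum_eq_sup (e : ℕ) (k : ℕ → ℕ) :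
    delta e k (∑ i ∈ Finset.Icc 1 e, k i) = (Finset.Icc 1 e).sup k := by
  have hset : {j : ℕ | ∑ i ∈ Finset.Icc 1 e, k i ≤ ∑ m ∈ Finset.Icc 1 j, mu e k m}
      = Set.Ici ((Finset.Icc 1 e).sup k) := by
    ext j; exact sum_le_sum_mu_iff e j k
  rw [delta, hset, csInf_Ici]

lemma Finset.sum_eq_card_mul_sup_iff {ι : Type*} (s : Finset ι) (k : ι → ℕ) :
    ∑ i ∈ s, k i = s.card * s.sup k ↔ ∀ i ∈ s, k i = s.sup k := by
  rw [← smul_eq_mul, ← Finset.sum_const]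
  exact Finset.sum_eq_sum_iff_of_le fun i hi => Finset.le_sup hi

theorem stmt7 (e r : ℕ) (he : 1 ≤ e) (hr : 1 ≤ r) (k : ℕ → ℕ)
    (hsum : ∑ i ∈ Finset.Icc 1 e, k i = r) :
    (r : ℤ) - (e : ℤ) * (delta e k r : ℤ) = 0 ↔
      (nzCount e k = e ∧ e ∣ r ∧ ∀ i ∈ Finset.Icc 1 e, k i = r / e) := by
  set M := (Finset.Icc 1 e).sup k with hMdef
  have hdelta : delta e k r = M := hsum ▸ delta_sum_eq_sup e k
  have hiff : r = e * M ↔ ∀ i ∈ Finset.Icc 1 e, k i = M := by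
    simpa [hsum] using Finset.sum_eq_card_mul_sup_iff (Finset.Icc 1 e) k
  rw [sub_eq_zero, hdelta]
  norm_cast
  constructor
  · intro hrM
    have hall := hiff.1 hrM
    have hM : M ≠ 0 := by rintro hM; simp [hM] at hrM; omega
    have hquot : r / e = M := by rw [hrM, Nat.mul_div_cancel_left _ (by omega)]
    refine ⟨?_, ⟨M, hrM⟩, fun i hi => (hall i hi).trans hquot.symm⟩
    rw [nzCount, Finset.filter_true_of_mem fun i hi => (hall i hi).symm ▸ hM]
    simp
  · rintro ⟨-, hdvd, hall⟩
    have hM : M = r / e := by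
      rw [hMdef, Finset.sup_congr rfl hall, Finset.sup_const ⟨1, by simp [he]⟩]
    rw [hM, Nat.mul_div_cancel' hdvd]
end

section
/- With the notation of the combinatorial function δ attached to a tuple (k_1,…,k_e) of nonnegative integers summing to r: if r − e·δ(r) = −1, then either (a) the tuple has f = e − 1 = r nonzero entries all equal to 1 (a single column of length e−1), or (b) f = e and the diagram is a rectangle with e rows and one missing cell, i.e., all nonzero k_i equal (r+1)/e except one which equals (r+1)/e − 1. -/
/-!
Counting the cells of the Young diagram column by column gives
`∑_{m ≤ j} μ(m) = ∑_i min (k_i, j)`. For `d = δ(r)` this forces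
`r ≤ ∑_i min (k_i, d) ≤ ∑_i k_i = r`, so every part is at most `d`. The hypothesis says
`e * d = r + 1`, so the deficits `d - k_i` add up to `1`: one part equals `d - 1` and all others
equal `d`. Then `d = 1` is the single column and `d ≥ 2` the rectangle with one missing cell.
-/

open Finset

lemma sum_mu_Icc_eq_sum_min (e : ℕ) (k : ℕ → ℕ) (j : ℕ) :
    ∑ m ∈ Icc 1 j, mu e k m = ∑ i ∈ Icc 1 e, min (k i) j := by
  simp only [mu, card_filter]
  rw [sum_comm]
  refine sum_congr rfl fun i _ => ?_
  rw [← card_filter]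
  have : (Icc 1 j).filter (fun m => m ≤ k i) = Icc 1 (min (k i) j) := by
    ext m; simp only [mem_filter, mem_Icc]; omega
  rw [this, Nat.card_Icc, Nat.add_sub_cancel]

lemma le_delta_of_sum_eq {e r : ℕ} {k : ℕ → ℕ} (hsum : ∑ i ∈ Icc 1 e, k i = r) {i : ℕ}
    (hi : i ∈ Icc 1 e) : k i ≤ delta e k r := by
  have hr : r = ∑ m ∈ Icc 1 r, mu e k m := calc
    r = ∑ i ∈ Icc 1 e, k i := hsum.symm
    _ = ∑ i ∈ Icc 1 e, min (k i) r := sum_congr rfl fun i hi =>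
      (min_eq_left (hsum ▸ single_le_sum (fun _ _ => Nat.zero_le _) hi)).symm
    _ = ∑ m ∈ Icc 1 r, mu e k m := (sum_mu_Icc_eq_sum_min e k r).symm
  have hd : r ≤ ∑ i ∈ Icc 1 e, min (k i) (delta e k r) := by
    rw [← sum_mu_Icc_eq_sum_min]
    exact Nat.sInf_mem (s := {j | r ≤ ∑ m ∈ Icc 1 j, mu e k m}) ⟨r, hr.le⟩
  by_contra! hlt
  have : ∑ i ∈ Icc 1 e, min (k i) (delta e k r) < ∑ i ∈ Icc 1 e, k i :=
    sum_lt_sum (fun j _ => min_le_left _ _) ⟨i, hi, min_lt_iff.2 (Or.inr hlt)⟩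
  omega

lemma exists_single_deficit {ι : Type*} [DecidableEq ι] {s : Finset ι} {k : ι → ℕ} {d : ℕ}
    (hle : ∀ i ∈ s, k i ≤ d) (hsum : ∑ i ∈ s, k i + 1 = #s * d) :
    ∃ i₀ ∈ s, k i₀ + 1 = d ∧ ∀ i ∈ s, i ≠ i₀ → k i = d := by
  have hdef : ∑ i ∈ s, (d - k i) = 1 := by
    rw [sum_tsub_distrib _ hle, sum_const, smul_eq_mul]; omega
  obtain ⟨i₀, hi₀, hpos⟩ : ∃ i ∈ s, d - k i ≠ 0 := by
    by_contra! h
    rw [sum_eq_zero h] at hdef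
    exact zero_ne_one hdef
  have hsplit := add_sum_erase s (fun i => d - k i) hi₀
  have hrest : ∑ i ∈ s.erase i₀, (d - k i) = 0 := by omega
  refine ⟨i₀, hi₀, by have := hle i₀ hi₀; omega, fun i hi hne => ?_⟩
  have := sum_eq_zero_iff.1 hrest i (mem_erase.2 ⟨hne, hi⟩)
  have := hle i hi
  omega

section nzCount

variable {e : ℕ} {k : ℕ → ℕ}

lemma nzCount_eq_of_forall_ne_zero (hk : ∀ i ∈ Icc 1 e, k i ≠ 0) : nzCount e k = e := by
  rw [nzCount, filter_true_of_mem hk, Nat.card_Icc, Nat.add_sub_cancel]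

lemma nzCount_eq_sub_one_of_unique_zero {i₀ : ℕ} (hi₀ : i₀ ∈ Icc 1 e) (hk₀ : k i₀ = 0)
    (hk : ∀ i ∈ Icc 1 e, i ≠ i₀ → k i ≠ 0) : nzCount e k = e - 1 := by
  have : (Icc 1 e).filter (fun i => k i ≠ 0) = (Icc 1 e).erase i₀ := by
    ext i
    simp only [mem_filter, mem_erase]
    exact ⟨fun ⟨hi, hne⟩ => ⟨fun h => hne (h ▸ hk₀), hi⟩,
      fun ⟨hne, hi⟩ => ⟨hi, hk i hi hne⟩⟩
  rw [nzCount, this, card_erase_of_mem hi₀, Nat.card_Icc, Nat.add_sub_cancel]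

end nzCount

theorem stmt8_general (e r : ℕ) (k : ℕ → ℕ)
    (hsum : ∑ i ∈ Finset.Icc 1 e, k i = r)
    (h : (r : ℤ) - (e : ℤ) * (delta e k r : ℤ) = -1) :
    (nzCount e k = e - 1 ∧ e - 1 = r ∧ ∀ i ∈ Finset.Icc 1 e, k i ≤ 1) ∨
      (nzCount e k = e ∧ e ∣ (r + 1) ∧
        ∃ i0 ∈ Finset.Icc 1 e, k i0 = (r + 1) / e - 1 ∧
          ∀ i ∈ Finset.Icc 1 e, i ≠ i0 → k i = (r + 1) / e) := by
  set d := delta e k r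
  have hed : e * d = r + 1 := by zify; linarith
  have hle : ∀ i ∈ Icc 1 e, k i ≤ d := fun _ => le_delta_of_sum_eq hsum
  obtain ⟨i₀, hi₀, hk₀, hk⟩ := exists_single_deficit hle <| by
    rw [Nat.card_Icc, Nat.add_sub_cancel]; omega
  have hd : 1 ≤ d := by omega
  have he : 0 < e := Nat.pos_of_ne_zero (by rintro rfl; omega)
  have hquot : (r + 1) / e = d := by rw [← hed, Nat.mul_div_cancel_left _ he]
  rcases hd.eq_or_lt with hd1 | hd2
  · left
    refine ⟨nzCount_eq_sub_one_of_unique_zero hi₀ (by omega) fun i hi hne => ?_, ?_,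
      fun i hi => hd1 ▸ hle i hi⟩
    · rw [hk i hi hne]; omega
    · rw [← hd1, mul_one] at hed; omega
  · right
    have hnz : ∀ i ∈ Icc 1 e, k i ≠ 0 := fun i hi => by
      rcases eq_or_ne i i₀ with rfl | hne
      · omega
      · rw [hk i hi hne]; omega
    exact ⟨nzCount_eq_of_forall_ne_zero hnz, ⟨d, hed.symm⟩, i₀, hi₀, by omega,
      fun i hi hne => hquot ▸ hk i hi hne⟩

theorem stmt8 (e r : ℕ) (he : 1 ≤ e) (hr : 1 ≤ r) (k : ℕ → ℕ)
    (hsum : ∑ i ∈ Finset.Icc 1 e, k i = r)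
    (h : (r : ℤ) - (e : ℤ) * (delta e k r : ℤ) = -1) :
    (nzCount e k = e - 1 ∧ e - 1 = r ∧ ∀ i ∈ Finset.Icc 1 e, k i ≤ 1) ∨
      (nzCount e k = e ∧ e ∣ (r + 1) ∧
        ∃ i0 ∈ Finset.Icc 1 e, k i0 = (r + 1) / e - 1 ∧
          ∀ i ∈ Finset.Icc 1 e, i ≠ i0 → k i = (r + 1) / e) :=
  stmt8_general e r k hsum h
end

section
/- Let (k_1,…,k_e) be nonnegative integers with sum r, defining the function δ and divisor coefficients as in the invariant Hitchin base. Let φ(t) ∈ M_r(ℂ[[t]]) satisfy the block valuation bounds: the (i,j)-block entries have valuation ≥ (l_j − l_i − 1 mod e). Then for every i ∈ {1,…,r}, the order of vanishing of Tr(∧^i φ) at t = 0 is at least e·δ(i) − i. -/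
/-!
The coefficient of `X ^ (r - i)` in the characteristic polynomial is, up to sign, the sum of the
principal `i × i` minors, and each minor is a signed sum over permutations `σ` of an `i`-element
set `S` of products `∏ a, M (σ a) a`, of order at least `∑ a, w (σ a) a` for the block weights
`w a b = (L b - L a - 1) mod e`. Along `σ` the numbers `w (σ a) a + 1` add up to `e * D`, where
`D` counts the non-descents `L a ≤ L (σ a)`, and every level `l` meets `S` in at most
`min (k l) D` elements. Summing over the levels, `i ≤ μ 1 + ⋯ + μ D` in the Young diagram of `k`,
that is `δ i ≤ D`, so `e * δ i - i ≤ e * D - i = ∑ a, w (σ a) a`.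
-/

open Finset Equiv

namespace PowerSeries

variable {R : Type*} [CommRing R]

theorem le_order_sum {ι : Type*} (s : Finset ι) (f : ι → R⟦X⟧) (m : ℕ∞)
    (h : ∀ i ∈ s, m ≤ (f i).order) : m ≤ (∑ i ∈ s, f i).order :=
  le_order _ _ fun j hj => by
    rw [map_sum]
    exact sum_eq_zero fun i hi => coeff_of_lt_order j (hj.trans_le (h i hi))

theorem le_order_det {n : Type*} [Fintype n] [DecidableEq n] (N : Matrix n n R⟦X⟧)
    (w : n → n → ℕ) (hw : ∀ a b, (w a b : ℕ∞) ≤ (N a b).order) (m : ℕ)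
    (hm : ∀ σ : Perm n, m ≤ ∑ a, w (σ a) a) : (m : ℕ∞) ≤ N.det.order := by
  rw [Matrix.det_apply']
  refine le_order_sum _ _ _ fun σ _ => ?_
  calc (m : ℕ∞) ≤ ∑ a, (w (σ a) a : ℕ∞) := mod_cast hm σ
    _ ≤ ∑ a, (N (σ a) a).order := sum_le_sum fun a _ => hw (σ a) a
    _ ≤ (∏ a, N (σ a) a).order := le_order_prod _ _
    _ ≤ _ := le_add_self.trans (le_order_mul _ _)

end PowerSeries

section Permutation

variable {α : Type*} [Fintype α] (σ : Perm α) (L : α → ℕ)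

theorem card_cross_up_eq_card_cross_down (l : ℕ) :
    #{a | L a < l ∧ l ≤ L (σ a)} = #{a | l ≤ L a ∧ L (σ a) < l} := by
  have hshift : ∑ a, (if l ≤ L (σ a) then 1 else 0) = ∑ a, (if l ≤ L a then 1 else 0) :=
    Equiv.sum_comp σ fun a => if l ≤ L a then 1 else 0
  have hpoint : ∀ a, (if l ≤ L a then 1 else 0) + (if L a < l ∧ l ≤ L (σ a) then 1 else 0) =
      (if l ≤ L (σ a) then 1 else 0) + (if l ≤ L a ∧ L (σ a) < l then 1 else 0) := by
    intro a
    split_ifs <;> omega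
  have := sum_congr rfl fun a (_ : a ∈ univ) => hpoint a
  simp only [sum_add_distrib, hshift, add_right_inj] at this
  simpa only [card_filter] using this

/- An element at level `l` is either a non-descent or crosses `l` downwards, and the downward
crossings are matched by the upward ones, which are non-descents at lower levels. -/
theorem card_level_le_card_nondescent (l : ℕ) :
    #{a | L a = l} ≤ #{a | L a ≤ L (σ a)} := by
  have hpoint : ∀ a, (if L a = l then 1 else 0) + (if L a < l ∧ l ≤ L (σ a) then 1 else 0) ≤
      (if L a ≤ L (σ a) then 1 else 0) + (if l ≤ L a ∧ L (σ a) < l then 1 else 0) := by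
    intro a
    split_ifs <;> omega
  have := sum_le_sum fun a (_ : a ∈ univ) => hpoint a
  simp only [sum_add_distrib, ← card_filter, card_cross_up_eq_card_cross_down] at this
  omega

theorem mod_weight_add_one {e x y : ℕ} (hx : 1 ≤ x ∧ x ≤ e) (hy : 1 ≤ y ∧ y ≤ e) :
    (x + 2 * e - y - 1) % e + 1 + y = x + if x ≤ y then e else 0 := by
  split_ifs with hxy
  · rw [show x + 2 * e - y - 1 = (x + e - y - 1) + e by omega, Nat.add_mod_right,
      Nat.mod_eq_of_lt (by omega)]
    omega
  · rw [show x + 2 * e - y - 1 = (x - y - 1) + e * 2 by omega, Nat.add_mul_mod_self_left,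
      Nat.mod_eq_of_lt (by omega)]
    omega

theorem sum_mod_weight_add_card {e : ℕ} (hL : ∀ a, 1 ≤ L a ∧ L a ≤ e) :
    ∑ a, (L a + 2 * e - L (σ a) - 1) % e + Fintype.card α = e * #{a | L a ≤ L (σ a)} := by
  have := sum_congr rfl fun a (_ : a ∈ univ) => mod_weight_add_one (hL a) (hL (σ a))
  simp only [sum_add_distrib, Equiv.sum_comp σ L, sum_ite, sum_const_zero, sum_const, smul_eq_mul,
    mul_one, card_univ] at this
  rw [mul_comm e]
  omega

end Permutation

theorem sum_min_eq_sum_mu (e D : ℕ) (k : ℕ → ℕ) :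
    ∑ l ∈ Icc 1 e, min (k l) D = ∑ m ∈ Icc 1 D, mu e k m := by
  have hmin : ∀ l, min (k l) D = #{m ∈ Icc 1 D | m ≤ k l} := by
    intro l
    rw [show {m ∈ Icc 1 D | m ≤ k l} = Icc 1 (min (k l) D) by ext m; simp; omega,
      Nat.card_Icc, Nat.add_sub_cancel]
  simp only [hmin, mu, card_filter]
  exact sum_comm

theorem delta_le_of_le_sum_min {e i D : ℕ} {k : ℕ → ℕ}
    (h : i ≤ ∑ l ∈ Icc 1 e, min (k l) D) : delta e k i ≤ D :=
  Nat.sInf_le (show i ≤ ∑ m ∈ Icc 1 D, mu e k m from sum_min_eq_sum_mu e D k ▸ h)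

theorem mul_delta_le_card_add_sum_mod_weight {α : Type*} [Fintype α] (σ : Perm α)
    {e : ℕ} (L : α → ℕ) (hL : ∀ a, 1 ≤ L a ∧ L a ≤ e) (k : ℕ → ℕ)
    (hk : ∀ l, #{a | L a = l} ≤ k l) :
    e * delta e k (Fintype.card α) ≤ Fintype.card α + ∑ a, (L a + 2 * e - L (σ a) - 1) % e := by
  set D := #{a | L a ≤ L (σ a)}
  have hfiber : Fintype.card α = ∑ l ∈ Icc 1 e, #{a | L a = l} :=
    card_eq_sum_card_fiberwise fun a _ => mem_Icc.mpr (hL a)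
  have hdelta : delta e k (Fintype.card α) ≤ D := by
    refine delta_le_of_le_sum_min (hfiber.trans_le (sum_le_sum fun l _ => ?_))
    exact le_min (hk l) (card_level_le_card_nondescent σ L l)
  calc e * delta e k (Fintype.card α) ≤ e * D := Nat.mul_le_mul_left e hdelta
    _ = _ := by rw [← sum_mod_weight_add_card σ L hL, add_comm]

theorem stmt13_general (r e : ℕ)
    (L : Fin r → ℕ) (hL : ∀ a, 1 ≤ L a ∧ L a ≤ e)
    (k : ℕ → ℕ) (hk : ∀ l : ℕ, k l = (Finset.univ.filter fun a => L a = l).card)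
    (M : Matrix (Fin r) (Fin r) (PowerSeries ℂ))
    (hval : ∀ a b : Fin r,
      (((L b + 2 * e - L a - 1) % e : ℕ) : ℕ∞) ≤ (M a b).order) :
    ∀ i ∈ Finset.Icc 1 r,
      ((e * delta e k i - i : ℕ) : ℕ∞) ≤ (M.charpoly.coeff (r - i)).order := by
  intro i hi
  have hminors := M.charpoly_coeff_eq_sum_minors i (by simp [(mem_Icc.mp hi).2])
  rw [Fintype.card_fin] at hminors
  rw [hminors]
  refine le_add_self.trans (PowerSeries.le_order_mul _ _) |>.trans' ?_
  refine PowerSeries.le_order_sum _ _ _ fun s hs => ?_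
  refine PowerSeries.le_order_det (M.submatrix Subtype.val Subtype.val)
    (fun a b : s => (L b + 2 * e - L a - 1) % e) (fun a b => hval a b) _ fun σ => ?_
  have hks : ∀ l, #{a : s | L a = l} ≤ k l := fun l => hk l ▸
    card_le_card_of_injOn Subtype.val (fun a ha => by simpa using ha)
      Subtype.val_injective.injOn
  have := mul_delta_le_card_add_sum_mod_weight σ (fun a : s => L a) (fun a => hL a) k hks
  rw [Fintype.card_coe, (mem_powersetCard.mp hs).2] at this
  omega

theorem stmt13 (r e : ℕ) (hr : 1 ≤ r) (he : 1 ≤ e)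
    (L : Fin r → ℕ) (hL : ∀ a, 1 ≤ L a ∧ L a ≤ e)
    (k : ℕ → ℕ) (hk : ∀ l : ℕ, k l = (Finset.univ.filter fun a => L a = l).card)
    (M : Matrix (Fin r) (Fin r) (PowerSeries ℂ))
    (hval : ∀ a b : Fin r,
      (((L b + 2 * e - L a - 1) % e : ℕ) : ℕ∞) ≤ (M a b).order) :
    ∀ i ∈ Finset.Icc 1 r,
      ((e * delta e k i - i : ℕ) : ℕ∞) ≤ (M.charpoly.coeff (r - i)).order :=
  stmt13_general r e L hL k hk M hval
end
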